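/- Let S be any set and let A = ℤ⟨S⟩ be the free associative unital ring on S (the free ℤ-algebra FreeAlgebra ℤ S). Let [A,A] ⊆ A be the additive subgroup generated by all commutators ab − ba (a, b ∈ A). Then the quotient abelian group A/[A,A] is torsion-free. In particular, every associative unital ring B admits a surjective ring homomorphism A′ → B from a ring A′ such that A′/[A′,A′] has no p-torsion for any prime p (take A′ the free ring on the underlying set of B). -/

import Mathlib

/-!
For a monoid `M`, the additive map sending a monomial `m ∈ k[M]` to the basis vector of its class
under the equivalence relation generated by `a * b ~ b * a` kills commutators, since on monomials
`m * n` and `n * m` are related. Conversely, related monomials agree modulo commutators, because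
`a * b - b * a` is one. Hence `k[M] / [k[M], k[M]]` is the free `k`-module on these classes, and
is torsion-free when `k` is. For `M` the free monoid on `S` the classes are the cyclic words, and
`ℤ⟨S⟩ ≅ ℤ[FreeMonoid S]`.
-/

/-- The additive subgroup `[A, A] ⊆ A` generated by all commutators `a * b - b * a`. -/
def commutatorAddSubgroup (A : Type) [Ring A] : AddSubgroup A :=
  AddSubgroup.closure {x : A | ∃ a b : A, x = a * b - b * a}

theorem mul_sub_mul_mem_commutatorAddSubgroup {A : Type} [Ring A] (a b : A) :
    a * b - b * a ∈ commutatorAddSubgroup A :=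
  AddSubgroup.subset_closure ⟨a, b, rfl⟩

theorem commutatorAddSubgroup_map_of_surjective {A B : Type} [Ring A] [Ring B] (f : A →+* B)
    (hf : Function.Surjective f) :
    (commutatorAddSubgroup A).map f.toAddMonoidHom = commutatorAddSubgroup B := by
  rw [commutatorAddSubgroup, commutatorAddSubgroup, AddMonoidHom.map_closure]
  congr 1
  ext x
  constructor
  · rintro ⟨_, ⟨a, b, rfl⟩, rfl⟩
    exact ⟨f a, f b, by simp⟩
  · rintro ⟨a, b, rfl⟩
    obtain ⟨a, rfl⟩ := hf a
    obtain ⟨b, rfl⟩ := hf b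
    exact ⟨a * b - b * a, ⟨a, b, rfl⟩, by simp⟩

noncomputable def RingEquiv.commutatorQuotientCongr {A B : Type} [Ring A] [Ring B] (e : A ≃+* B) :
    A ⧸ commutatorAddSubgroup A ≃+ B ⧸ commutatorAddSubgroup B :=
  QuotientAddGroup.congr _ _ e.toAddEquiv
    (commutatorAddSubgroup_map_of_surjective e.toRingHom e.surjective)

def Monoid.cyclicRel (M : Type*) [Mul M] (u v : M) : Prop :=
  ∃ a b, u = a * b ∧ v = b * a

-- For a free monoid these are the cyclic words, for a group the conjugacy classes.
abbrev Monoid.CyclicClass (M : Type*) [Mul M] : Type _ :=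
  Quot (Monoid.cyclicRel M)

namespace MonoidAlgebra

open Monoid

variable {k M : Type}

section Trace

variable [Mul M]

noncomputable def cyclicTrace [Semiring k] : MonoidAlgebra k M →+ (CyclicClass M →₀ k) :=
  (Finsupp.mapDomain.addMonoidHom (Quot.mk _)).comp coeffAddEquiv.toAddMonoidHom

@[simp]
theorem cyclicTrace_single [Semiring k] (m : M) (r : k) :
    cyclicTrace (single m r) = Finsupp.single (Quot.mk _ m) r := by
  simp [cyclicTrace]

theorem cyclicTrace_mul_comm [CommSemiring k] (x y : MonoidAlgebra k M) :
    cyclicTrace (x * y) = cyclicTrace (y * x) := by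
  suffices AddMonoidHom.mul.compr₂ cyclicTrace = AddMonoidHom.mul.flip.compr₂ cyclicTrace from
    congr($this x y)
  refine addMonoidHom_ext fun m r => addMonoidHom_ext fun n s => ?_
  simp only [AddMonoidHom.compr₂_apply, AddMonoidHom.mul_apply, AddMonoidHom.flip_apply,
    single_mul_single, cyclicTrace_single, mul_comm r s]
  exact congrArg (Finsupp.single · _) (Quot.sound ⟨m, n, rfl, rfl⟩)

end Trace

variable [Monoid M]

theorem commutatorAddSubgroup_le_ker_cyclicTrace [CommRing k] :
    commutatorAddSubgroup (MonoidAlgebra k M) ≤ (cyclicTrace (k := k) (M := M)).ker := by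
  refine (AddSubgroup.closure_le _).2 ?_
  rintro _ ⟨x, y, rfl⟩
  simp [AddMonoidHom.mem_ker, cyclicTrace_mul_comm x y]

section Ring

variable [Ring k]

theorem mk_single_mul_comm (a b : M) (r : k) :
    (QuotientAddGroup.mk (single (a * b) r) : MonoidAlgebra k M ⧸ commutatorAddSubgroup _) =
      QuotientAddGroup.mk (single (b * a) r) := by
  have hab : single (a * b) r = single a r * single b 1 := by rw [single_mul_single, mul_one]
  have hba : single (b * a) r = single b 1 * single a r := by rw [single_mul_single, one_mul]
  rw [QuotientAddGroup.eq_iff_sub_mem, hab, hba]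
  exact mul_sub_mul_mem_commutatorAddSubgroup _ _

noncomputable def cyclicLift :
    (CyclicClass M →₀ k) →+ MonoidAlgebra k M ⧸ commutatorAddSubgroup (MonoidAlgebra k M) :=
  Finsupp.liftAddHom fun c =>
    Quot.lift (fun m => (QuotientAddGroup.mk' _).comp (singleAddHom m))
      (by rintro _ _ ⟨a, b, rfl, rfl⟩; ext r; exact mk_single_mul_comm a b r) c

@[simp]
theorem cyclicLift_single (m : M) (r : k) :
    cyclicLift (Finsupp.single (Quot.mk _ m) r) =
      (QuotientAddGroup.mk (single m r) : MonoidAlgebra k M ⧸ commutatorAddSubgroup _) := by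
  simp [cyclicLift]

end Ring

variable [CommRing k]

noncomputable def commutatorQuotientEquiv :
    MonoidAlgebra k M ⧸ commutatorAddSubgroup (MonoidAlgebra k M) ≃+ (CyclicClass M →₀ k) :=
  AddMonoidHom.toAddEquiv
    (QuotientAddGroup.lift _ cyclicTrace commutatorAddSubgroup_le_ker_cyclicTrace) cyclicLift
    (QuotientAddGroup.addMonoidHom_ext _ <| addMonoidHom_ext fun m r => by simp)
    (Finsupp.addHom_ext fun c r => by induction c using Quot.ind; simp)

instance isAddTorsionFree_commutatorQuotient [IsAddTorsionFree k] :
    IsAddTorsionFree (MonoidAlgebra k M ⧸ commutatorAddSubgroup (MonoidAlgebra k M)) :=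
  Function.Injective.isAddTorsionFree (commutatorQuotientEquiv (k := k) (M := M)).toAddMonoidHom
    commutatorQuotientEquiv.injective

end MonoidAlgebra

instance FreeAlgebra.isAddTorsionFree_commutatorQuotient {k S : Type} [CommRing k]
    [IsAddTorsionFree k] :
    IsAddTorsionFree (FreeAlgebra k S ⧸ commutatorAddSubgroup (FreeAlgebra k S)) :=
  let e := (FreeAlgebra.equivMonoidAlgebraFreeMonoid (R := k) (X := S)).toRingEquiv
  Function.Injective.isAddTorsionFree e.commutatorQuotientCongr.toAddMonoidHom
    e.commutatorQuotientCongr.injective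

/-- For the free associative unital ring `A = ℤ⟨S⟩`, the quotient abelian group
`A / [A, A]` is torsion-free; in particular, every associative unital ring `B` is a
surjective image of a ring `A'` (the free ring on the underlying set of `B`) such
that `A' / [A', A']` has no `p`-torsion for any prime `p`. -/
theorem stmt_9 (S : Type) :
    (∀ (x : FreeAlgebra ℤ S ⧸ commutatorAddSubgroup (FreeAlgebra ℤ S)) (n : ℕ),
      n ≠ 0 → n • x = 0 → x = 0) ∧
    (∀ (B : Type) [Ring B], ∃ φ : FreeAlgebra ℤ B →+* B,
      Function.Surjective φ ∧
      ∀ (x : FreeAlgebra ℤ B ⧸ commutatorAddSubgroup (FreeAlgebra ℤ B)) (n : ℕ),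
        n ≠ 0 → n • x = 0 → x = 0) := by
  refine ⟨fun x n hn => (nsmul_eq_zero_iff_right hn).1, fun B _ => ?_⟩
  exact ⟨(FreeAlgebra.lift ℤ id).toRingHom, fun b => ⟨FreeAlgebra.ι ℤ b, by simp⟩,
    fun x n hn => (nsmul_eq_zero_iff_right hn).1⟩
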